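/- Let SS, TT, ST be square-integrable random variables with E[SS] = E[TT], Var(SS) = Var(TT), and Cov(SS, TT) = 0. Define IDD = SS − TT, SD = SS − ST, TD = TT − ST. Then the following are equivalent: (1) Cov(TT, ST) > Cov(SS, ST); (2) Cov(IDD, SD)² > Cov(IDD, TD)²; (3) Var(SD) > Var(TD); (4) E[SD²] > E[TD²]. -/

import Mathlib

open MeasureTheory ProbabilityTheory

noncomputable def cov {Ω : Type*} [MeasurableSpace Ω] (μ : Measure Ω) (X Y : Ω → ℝ) : ℝ :=
  (∫ ω, X ω * Y ω ∂μ) - (∫ ω, X ω ∂μ) * (∫ ω, Y ω ∂μ)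

noncomputable def var {Ω : Type*} [MeasurableSpace Ω] (μ : Measure Ω) (X : Ω → ℝ) : ℝ :=
  cov μ X X

/- Everything reduces to bilinearity of `cov` on `L²`: with `v = Var SS`, `a = Cov(SS, ST)`,
`b = Cov(TT, ST)` and `d = b - a`, the hypotheses give `Cov(IDD, SD) = v + d`,
`Cov(IDD, TD) = -(v - d)`, `Var SD - Var TD = 2d`, and, the means of `SD` and `TD` being equal,
`E[SD²] - E[TD²] = Var SD - Var TD`. Since `(v + d)² - (v - d)² = 4vd` with `v > 0`,
each of the four conditions says `d > 0`. -/

lemma sq_sub_lt_sq_add_iff {v d : ℝ} (hv : 0 < v) : (v - d) ^ 2 < (v + d) ^ 2 ↔ 0 < d := by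
  rw [← sub_pos, show (v + d) ^ 2 - (v - d) ^ 2 = 4 * v * d by ring]
  exact mul_pos_iff_of_pos_left (by positivity)

section Covariance

variable {Ω : Type*} [MeasurableSpace Ω] {μ : Measure Ω}

lemma cov_comm (X Y : Ω → ℝ) : cov μ X Y = cov μ Y X := by
  simp only [cov, mul_comm (X _), mul_comm (∫ ω, X ω ∂μ)]

lemma integral_sq_eq_var_add_sq (X : Ω → ℝ) :
    ∫ ω, X ω ^ 2 ∂μ = var μ X + (∫ ω, X ω ∂μ) ^ 2 := by
  simp only [var, cov, sq]
  ring

lemma integral_sq_sub_integral_sq_of_integral_eq {X Y : Ω → ℝ}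
    (h : ∫ ω, X ω ∂μ = ∫ ω, Y ω ∂μ) :
    ∫ ω, X ω ^ 2 ∂μ - ∫ ω, Y ω ^ 2 ∂μ = var μ X - var μ Y := by
  rw [integral_sq_eq_var_add_sq, integral_sq_eq_var_add_sq, h]
  ring

variable [IsFiniteMeasure μ] {X Y Z : Ω → ℝ}

lemma cov_sub_left (hX : MemLp X 2 μ) (hY : MemLp Y 2 μ) (hZ : MemLp Z 2 μ) :
    cov μ (fun ω => X ω - Y ω) Z = cov μ X Z - cov μ Y Z := by
  have hXY : ∫ ω, (X ω - Y ω) * Z ω ∂μ = ∫ ω, X ω * Z ω ∂μ - ∫ ω, Y ω * Z ω ∂μ := by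
    simp only [sub_mul]
    exact integral_sub (hX.integrable_mul hZ) (hY.integrable_mul hZ)
  simp only [cov, hXY, integral_sub (hX.integrable one_le_two) (hY.integrable one_le_two)]
  ring

lemma cov_sub_right (hX : MemLp X 2 μ) (hY : MemLp Y 2 μ) (hZ : MemLp Z 2 μ) :
    cov μ Z (fun ω => X ω - Y ω) = cov μ Z X - cov μ Z Y := by
  rw [cov_comm, cov_sub_left hX hY hZ, cov_comm X, cov_comm Y]

lemma cov_sub_sub {W : Ω → ℝ} (hX : MemLp X 2 μ) (hY : MemLp Y 2 μ) (hZ : MemLp Z 2 μ)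
    (hW : MemLp W 2 μ) :
    cov μ (fun ω => X ω - Y ω) (fun ω => Z ω - W ω)
      = cov μ X Z - cov μ X W - cov μ Y Z + cov μ Y W := by
  rw [cov_sub_left (Z := fun ω => Z ω - W ω) hX hY (hZ.sub hW), cov_sub_right hZ hW hX,
    cov_sub_right hZ hW hY]
  ring

lemma var_sub (hX : MemLp X 2 μ) (hY : MemLp Y 2 μ) :
    var μ (fun ω => X ω - Y ω) = var μ X - 2 * cov μ X Y + var μ Y := by
  rw [var, cov_sub_sub hX hY hX hY, cov_comm Y X, var, var]
  ring

end Covariance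

theorem stmt12 {Ω : Type*} [MeasurableSpace Ω] (μ : Measure Ω) [IsProbabilityMeasure μ]
    (SS TT ST : Ω → ℝ) (hSS : MemLp SS 2 μ) (hTT : MemLp TT 2 μ) (hST : MemLp ST 2 μ)
    (hE : ∫ ω, SS ω ∂μ = ∫ ω, TT ω ∂μ) (hvar : var μ SS = var μ TT)
    (hpos : 0 < var μ SS) (hcov : cov μ SS TT = 0) :
    List.TFAE [
      cov μ TT ST > cov μ SS ST,
      (cov μ (fun ω => SS ω - TT ω) (fun ω => SS ω - ST ω)) ^ 2 >
        (cov μ (fun ω => SS ω - TT ω) (fun ω => TT ω - ST ω)) ^ 2,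
      var μ (fun ω => SS ω - ST ω) > var μ (fun ω => TT ω - ST ω),
      (∫ ω, (SS ω - ST ω) ^ 2 ∂μ) > (∫ ω, (TT ω - ST ω) ^ 2 ∂μ)] := by
  set v := var μ SS
  set d := cov μ TT ST - cov μ SS ST
  have hcov_SD : cov μ (fun ω => SS ω - TT ω) (fun ω => SS ω - ST ω) = v + d := by
    rw [cov_sub_sub hSS hTT hSS hST, cov_comm TT SS, hcov]
    simp only [v, d, var]
    ring
  have hcov_TD : cov μ (fun ω => SS ω - TT ω) (fun ω => TT ω - ST ω) = -(v - d) := by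
    rw [cov_sub_sub hSS hTT hTT hST, hcov, ← var, ← hvar]
    ring
  have hvar_sub : var μ (fun ω => SS ω - ST ω) - var μ (fun ω => TT ω - ST ω) = 2 * d := by
    rw [var_sub hSS hST, var_sub hTT hST, ← hvar]
    ring
  have hmean : ∫ ω, (SS ω - ST ω) ∂μ = ∫ ω, (TT ω - ST ω) ∂μ := by
    rw [integral_sub (hSS.integrable one_le_two) (hST.integrable one_le_two),
      integral_sub (hTT.integrable one_le_two) (hST.integrable one_le_two), hE]
  have hcond_cov : cov μ TT ST > cov μ SS ST ↔ 0 < d := sub_pos.symm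
  have hcond_var : var μ (fun ω => SS ω - ST ω) > var μ (fun ω => TT ω - ST ω) ↔ 0 < d := by
    rw [gt_iff_lt, ← sub_pos, hvar_sub]
    exact mul_pos_iff_of_pos_left two_pos
  tfae_have 1 ↔ 2 := by
    rw [hcov_SD, hcov_TD, neg_sq]
    exact hcond_cov.trans (sq_sub_lt_sq_add_iff hpos).symm
  tfae_have 1 ↔ 3 := hcond_cov.trans hcond_var.symm
  tfae_have 3 ↔ 4 := by
    rw [gt_iff_lt, gt_iff_lt, ← sub_pos, ← sub_pos (a := ∫ ω, _ ∂μ),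
      integral_sq_sub_integral_sq_of_integral_eq hmean]
  tfae_finish
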